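/- Let (S, Σ) be a measurable space, {μ_n} a sequence of measures converging setwise to a finite measure μ, and {f_n} a pointwise nondecreasing sequence of measurable extended-real-valued functions on S; define f(s) := lim_{n→∞} f_n(s). If the functions f_1^- and f^+ are asymptotically uniformly integrable with respect to {μ_n}, then lim_{n→∞} ∫_S f_n(s) μ_n(ds) = ∫_S f(s) μ(ds). -/

import Mathlib

open MeasureTheory Filter Metric Topology
open scoped ENNReal

/-- The positive part of an extended real, as a value in `ℝ≥0∞`. -/
noncomputable def EReal.posENN (x : EReal) : ℝ≥0∞ := (max x 0).abs

/-- The negative part of an extended real, as a value in `ℝ≥0∞`. -/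
noncomputable def EReal.negENN (x : EReal) : ℝ≥0∞ := (max (-x) 0).abs

/-- The integral of an extended-real-valued function: `∫ f⁺ dμ − ∫ f⁻ dμ` (in `EReal`). -/
noncomputable def eIntegral {S : Type*} [MeasurableSpace S]
    (μ : Measure S) (f : S → EReal) : EReal :=
  ((∫⁻ s, (f s).posENN ∂μ : ℝ≥0∞) : EReal) - ((∫⁻ s, (f s).negENN ∂μ : ℝ≥0∞) : EReal)

/-- The integral of `f` w.r.t. `μ` is defined: at least one of `∫ f⁺ dμ`, `∫ f⁻ dμ` is finite. -/
def IntegralDefined {S : Type*} [MeasurableSpace S] (μ : Measure S) (f : S → EReal) : Prop :=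
  (∫⁻ s, (f s).posENN ∂μ) ≠ ⊤ ∨ (∫⁻ s, (f s).negENN ∂μ) ≠ ⊤

/-- The integral `∫_S |f(s)| 1{|f(s)| ≥ K} μ(ds)`. -/
noncomputable def tailIntegral {S : Type*} [MeasurableSpace S]
    (μ : Measure S) (f : S → EReal) (K : ℝ) : ℝ≥0∞ :=
  ∫⁻ s in {s | (K : EReal) ≤ (f s).abs}, (f s).abs ∂μ

/-- `{f_n}` is asymptotically uniformly integrable w.r.t. `{μ_n}`. -/
def AUI {S : Type*} [MeasurableSpace S] (μ : ℕ → Measure S) (f : ℕ → S → EReal) : Prop :=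
  Tendsto (fun K : ℝ => limsup (fun n => tailIntegral (μ n) (f n) K) atTop) atTop (𝓝 0)

/-- `{μ_n}` converges setwise to `μ`: `μ_n(C) → μ(C)` for every measurable set `C`. -/
def SetwiseConv {S : Type*} [MeasurableSpace S] (μ : ℕ → Measure S) (ν : Measure S) : Prop :=
  ∀ C : Set S, MeasurableSet C → Tendsto (fun n => μ n C) atTop (𝓝 (ν C))

/-!
Split `f n` into its positive and negative parts: `(f n)⁺` increases to `g⁺` and `(f n)⁻`
decreases to `g⁻`. Under setwise convergence Fatou's lemma `∫ w dν ≤ liminf ∫ w dμₙ` holds (it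
holds for simple functions, whose integrals converge level set by level set), so bounded
measurable functions have convergent integrals. The matching upper bound
`limsup ∫ wₙ dμₙ ≤ ∫ v dν` for `wₙ ≤ v ≤ u` comes from truncating at a level `K`: `min v K` is
bounded, and what lies above `K` is dominated by the tail of `u`, which asymptotic uniform
integrability makes small uniformly in large `n`. For the negative parts this is applied with
`v = (f m)⁻`, `u = (f 0)⁻`, and `m → ∞` by monotone convergence for decreasing sequences, which
needs `∫ (f 0)⁻ dν < ∞`, again a consequence of asymptotic uniform integrability.
-/

open scoped NNReal

namespace EReal

lemma posENN_eq_toENNReal (x : EReal) : x.posENN = x.toENNReal := by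
  induction x with
  | bot => simp [posENN]
  | coe r =>
    rcases le_total r 0 with h | h
    · rw [posENN, max_eq_right (by exact_mod_cast h), abs_zero, real_coe_toENNReal,
        ENNReal.ofReal_of_nonpos h]
    · rw [posENN, max_eq_left (by exact_mod_cast h), abs_def, abs_of_nonneg h,
        real_coe_toENNReal]
  | top => simp [posENN]

lemma negENN_eq_toENNReal_neg (x : EReal) : x.negENN = (-x).toENNReal :=
  posENN_eq_toENNReal (-x)

lemma tendsto_coe_ennreal_sub {ι : Type*} {l : Filter ι} {a b : ι → ℝ≥0∞} {x y : ℝ≥0∞}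
    (ha : Tendsto a l (𝓝 x)) (hb : Tendsto b l (𝓝 y)) (hxy : x ≠ ⊤ ∨ y ≠ ⊤) :
    Tendsto (fun i => (a i : EReal) - b i) l (𝓝 ((x : EReal) - y)) := by
  have hcont : ContinuousAt (fun p : EReal × EReal => p.1 + p.2) ((x : EReal), -(y : EReal)) :=
    continuousAt_add (by simpa using hxy) (.inl (coe_ennreal_ne_bot x))
  simp_rw [sub_eq_add_neg]
  exact hcont.tendsto.comp ((tendsto_coe_ennreal.2 ha).prodMk_nhds (tendsto_coe_ennreal.2 hb).neg)

end EReal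

namespace ENNReal

variable {ι : Type*} {l : Filter ι}

lemma le_limsup_add [l.NeBot] (u v : ι → ℝ≥0∞) :
    limsup u l + liminf v l ≤ limsup (u + v) l := by
  rcases eq_or_ne (limsup u l) 0 with hu | hu
  · rw [hu, zero_add]
    exact (liminf_le_liminf (.of_forall fun n => le_add_self)).trans liminf_le_limsup
  rcases eq_or_ne (liminf v l) 0 with hv | hv
  · rw [hv, add_zero]
    exact limsup_le_limsup (.of_forall fun n => le_self_add)
  refine le_of_forall_lt_imp_le_of_dense fun c hc => ?_
  obtain ⟨a, ha, b, hb, hc⟩ := exists_lt_add_of_lt_add hc hu hv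
  refine le_limsup_of_frequently_le (u := u + v) (((frequently_lt_of_lt_limsup
    (by isBoundedDefault) ha).and_eventually (eventually_lt_of_lt_liminf hb)).mono
      fun n hn => ?_) (by isBoundedDefault)
  exact (hc.trans_le (add_le_add hn.1.le hn.2.le)).le

-- Unlike `ENNReal.limsup_add_le`, this does not require a countably intersecting filter.
lemma limsup_add_le' (u v : ι → ℝ≥0∞) :
    limsup (u + v) l ≤ limsup u l + limsup v l := by
  refine le_of_forall_gt fun c hc => ?_
  obtain ⟨a, ha, b, hb, hc⟩ := exists_add_lt_of_add_lt hc
  refine (limsup_le_of_le (by isBoundedDefault) ?_).trans_lt hc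
  filter_upwards [eventually_lt_of_limsup_lt ha, eventually_lt_of_limsup_lt hb] with n hu hv
  exact add_le_add hu.le hv.le

end ENNReal

lemma lintegral_le_lintegral_min_add_tail {S : Type*} [MeasurableSpace S] (m : Measure S)
    {v u : S → ℝ≥0∞} (hu : Measurable u) (hvu : v ≤ u) (K : ℝ≥0∞) :
    ∫⁻ s, v s ∂m ≤ ∫⁻ s, min (v s) K ∂m + ∫⁻ s in {s | K ≤ u s}, u s ∂m := by
  have hK : MeasurableSet {s | K ≤ u s} := measurableSet_le measurable_const hu
  rw [← lintegral_indicator hK, ← lintegral_add_right _ (hu.indicator hK)]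
  refine lintegral_mono fun s => ?_
  by_cases hs : K ≤ u s
  · simpa [Set.indicator_of_mem (show s ∈ {s | K ≤ u s} from hs)] using le_add_left (hvu s)
  · have hvK : v s ≤ K := (hvu s).trans (not_le.1 hs).le
    simp [Set.indicator_of_notMem (show s ∉ {s | K ≤ u s} from hs), hvK]

/-- `AUI` for a single `ℝ≥0∞`-valued function, with the truncation level `K` taken in `ℝ≥0`. -/
def AUIENN {S : Type*} [MeasurableSpace S] (μ : ℕ → Measure S) (u : S → ℝ≥0∞) : Prop :=
  Tendsto (fun K : ℝ≥0 => limsup (fun n => ∫⁻ s in {s | (K : ℝ≥0∞) ≤ u s}, u s ∂μ n) atTop)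
    atTop (𝓝 0)

lemma AUI.auiENN_toENNReal {S : Type*} [MeasurableSpace S] {μ : ℕ → Measure S} {g : S → EReal}
    (h : AUI μ (fun _ s => max (g s) 0)) : AUIENN μ (fun s => (g s).toENNReal) := by
  refine (h.comp (NNReal.tendsto_coe_atTop.2 tendsto_id)).congr fun K => ?_
  have hpos (s : S) : (max (g s) 0).abs = (g s).toENNReal := EReal.posENN_eq_toENNReal (g s)
  simp only [Function.comp_apply, tailIntegral, hpos, id, ← EReal.coe_nnreal_eq_coe_real,
    EReal.coe_ennreal_le_coe_ennreal_iff]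

namespace SetwiseConv

variable {S : Type*} [MeasurableSpace S] {μ : ℕ → Measure S} {ν : Measure S}
  {w : ℕ → S → ℝ≥0∞} {v u : S → ℝ≥0∞}

lemma tendsto_lintegral_simpleFunc (hsw : SetwiseConv μ ν) (φ : SimpleFunc S ℝ≥0) :
    Tendsto (fun n => ∫⁻ s, φ s ∂μ n) atTop (𝓝 (∫⁻ s, φ s ∂ν)) := by
  have h (m : Measure S) : ∫⁻ s, φ s ∂m = ∑ c ∈ φ.range, (c : ℝ≥0∞) * m (φ ⁻¹' {c}) := by
    rw [← SimpleFunc.map_lintegral, ← SimpleFunc.lintegral_eq_lintegral]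
    rfl
  simp only [h]
  exact tendsto_finsetSum _ fun c _ =>
    ENNReal.Tendsto.const_mul (hsw _ (φ.measurableSet_preimage _)) (.inr ENNReal.coe_ne_top)

lemma lintegral_le_liminf (hsw : SetwiseConv μ ν) (w : S → ℝ≥0∞) :
    ∫⁻ s, w s ∂ν ≤ liminf (fun n => ∫⁻ s, w s ∂μ n) atTop := by
  rw [lintegral_eq_nnreal]
  refine iSup₂_le fun φ hφ => ?_
  rw [← SimpleFunc.lintegral_eq_lintegral]
  simp only [SimpleFunc.map_apply]
  rw [← (hsw.tendsto_lintegral_simpleFunc φ).liminf_eq]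
  exact liminf_le_liminf (.of_forall fun n => lintegral_mono hφ)

lemma tendsto_lintegral_of_le_const (hsw : SetwiseConv μ ν) [IsFiniteMeasure ν]
    (hv : Measurable v) {C : ℝ≥0∞} (hC : C ≠ ⊤) (hvC : ∀ s, v s ≤ C) :
    Tendsto (fun n => ∫⁻ s, v s ∂μ n) atTop (𝓝 (∫⁻ s, v s ∂ν)) := by
  -- Fatou applied to both `v` and `C - v`, whose integrals add up to `C * m univ`.
  have hsum (m : Measure S) : ∫⁻ s, v s ∂m + ∫⁻ s, C - v s ∂m = C * m Set.univ := by
    rw [← lintegral_add_left hv, ← lintegral_const]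
    exact lintegral_congr fun s => add_tsub_cancel_of_le (hvC s)
  have hfin : ∫⁻ s, C - v s ∂ν ≠ ⊤ :=
    ne_top_of_le_ne_top (ENNReal.mul_ne_top hC (measure_ne_top ν _)) (hsum ν ▸ le_add_self)
  refine tendsto_of_le_liminf_of_limsup_le (hsw.lintegral_le_liminf v)
    (ENNReal.le_of_add_le_add_right hfin ?_)
  calc limsup (fun n => ∫⁻ s, v s ∂μ n) atTop + ∫⁻ s, C - v s ∂ν
      ≤ limsup (fun n => ∫⁻ s, v s ∂μ n) atTop + liminf (fun n => ∫⁻ s, C - v s ∂μ n) atTop :=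
        add_le_add_right (hsw.lintegral_le_liminf _) _
    _ ≤ limsup (fun n => ∫⁻ s, v s ∂μ n + ∫⁻ s, C - v s ∂μ n) atTop :=
        ENNReal.le_limsup_add _ _
    _ = ∫⁻ s, v s ∂ν + ∫⁻ s, C - v s ∂ν := by
        simp only [hsum]
        exact (ENNReal.Tendsto.const_mul (hsw _ .univ) (.inr hC)).limsup_eq

lemma limsup_lintegral_le_add_tail (hsw : SetwiseConv μ ν) [IsFiniteMeasure ν]
    (hv : Measurable v) (hu : Measurable u) (hwv : ∀ᶠ n in atTop, w n ≤ v) (hvu : v ≤ u)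
    (K : ℝ≥0) :
    limsup (fun n => ∫⁻ s, w n s ∂μ n) atTop ≤
      ∫⁻ s, min (v s) K ∂ν + limsup (fun n => ∫⁻ s in {s | (K : ℝ≥0∞) ≤ u s}, u s ∂μ n) atTop := by
  have hmin := hsw.tendsto_lintegral_of_le_const (hv.min measurable_const) ENNReal.coe_ne_top
    fun s => min_le_right (v s) K
  calc limsup (fun n => ∫⁻ s, w n s ∂μ n) atTop
      ≤ limsup (fun n => ∫⁻ s, min (v s) K ∂μ n +
          ∫⁻ s in {s | (K : ℝ≥0∞) ≤ u s}, u s ∂μ n) atTop :=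
        limsup_le_limsup (hwv.mono fun n hn =>
          (lintegral_mono hn).trans (lintegral_le_lintegral_min_add_tail _ hu hvu _))
    _ ≤ _ := ENNReal.limsup_add_le' _ _
    _ = _ := by rw [hmin.limsup_eq]

lemma limsup_lintegral_le (hsw : SetwiseConv μ ν) [IsFiniteMeasure ν] (hv : Measurable v)
    (hu : Measurable u) (hwv : ∀ᶠ n in atTop, w n ≤ v) (hvu : v ≤ u) (hu_aui : AUIENN μ u) :
    limsup (fun n => ∫⁻ s, w n s ∂μ n) atTop ≤ ∫⁻ s, v s ∂ν := by
  have hlim : Tendsto (fun K : ℝ≥0 => ∫⁻ s, v s ∂ν +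
      limsup (fun n => ∫⁻ s in {s | (K : ℝ≥0∞) ≤ u s}, u s ∂μ n) atTop) atTop
      (𝓝 (∫⁻ s, v s ∂ν)) := by
    simpa using tendsto_const_nhds.add hu_aui
  refine ge_of_tendsto hlim (.of_forall fun K =>
    (hsw.limsup_lintegral_le_add_tail hv hu hwv hvu K).trans ?_)
  gcongr
  exact min_le_left _ _

lemma lintegral_ne_top_of_auiENN (hsw : SetwiseConv μ ν) [IsFiniteMeasure ν] (hu : Measurable u)
    (hu_aui : AUIENN μ u) : ∫⁻ s, u s ∂ν ≠ ⊤ := by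
  obtain ⟨K, hK⟩ := (hu_aui.eventually_lt_const ENNReal.zero_lt_top).exists
  have hmin : ∫⁻ s, min (u s) K ∂ν ≠ ⊤ :=
    ne_top_of_le_ne_top (ENNReal.mul_ne_top ENNReal.coe_ne_top (measure_ne_top ν Set.univ))
      ((lintegral_mono fun s => min_le_right _ _).trans (lintegral_const _).le)
  refine ne_top_of_le_ne_top (ENNReal.add_ne_top.2 ⟨hmin, hK.ne⟩) ?_
  calc ∫⁻ s, u s ∂ν ≤ liminf (fun n => ∫⁻ s, u s ∂μ n) atTop := hsw.lintegral_le_liminf u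
    _ ≤ limsup (fun n => ∫⁻ s, u s ∂μ n) atTop := liminf_le_limsup
    _ ≤ _ := hsw.limsup_lintegral_le_add_tail (w := fun _ => u) hu hu (.of_forall fun _ => le_rfl)
          le_rfl K

theorem tendsto_lintegral_of_monotone (hsw : SetwiseConv μ ν) [IsFiniteMeasure ν]
    (hw : ∀ n, Measurable (w n)) (hmono : Monotone w)
    (hv : ∀ s, Tendsto (w · s) atTop (𝓝 (v s))) (hv_aui : AUIENN μ v) :
    Tendsto (fun n => ∫⁻ s, w n s ∂μ n) atTop (𝓝 (∫⁻ s, v s ∂ν)) := by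
  have hvm : Measurable v := measurable_of_tendsto_metrizable hw (tendsto_pi_nhds.2 hv)
  have hv_eq (s : S) : v s = ⨆ n, w n s :=
    tendsto_nhds_unique (hv s) (tendsto_atTop_iSup fun _ _ h => hmono h s)
  have hwv (n : ℕ) : w n ≤ v := fun s => (hv_eq s).symm ▸ le_iSup (w · s) n
  refine tendsto_of_le_liminf_of_limsup_le ?_
    (hsw.limsup_lintegral_le hvm hvm (.of_forall hwv) le_rfl hv_aui)
  rw [lintegral_congr hv_eq, lintegral_iSup hw hmono]
  refine iSup_le fun m => (hsw.lintegral_le_liminf (w m)).trans (liminf_le_liminf ?_)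
  filter_upwards [eventually_ge_atTop m] with n hn using lintegral_mono (hmono hn)

theorem tendsto_lintegral_of_antitone (hsw : SetwiseConv μ ν) [IsFiniteMeasure ν]
    (hw : ∀ n, Measurable (w n)) (hanti : Antitone w)
    (hv : ∀ s, Tendsto (w · s) atTop (𝓝 (v s))) (hw_aui : AUIENN μ (w 0)) :
    Tendsto (fun n => ∫⁻ s, w n s ∂μ n) atTop (𝓝 (∫⁻ s, v s ∂ν)) := by
  have hv_eq (s : S) : v s = ⨅ n, w n s :=
    tendsto_nhds_unique (hv s) (tendsto_atTop_iInf fun _ _ h => hanti h s)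
  have hvw (n : ℕ) : v ≤ w n := fun s => (hv_eq s).symm ▸ iInf_le (w · s) n
  refine tendsto_of_le_liminf_of_limsup_le ((hsw.lintegral_le_liminf v).trans
    (liminf_le_liminf (.of_forall fun n => lintegral_mono (hvw n)))) ?_
  rw [lintegral_congr hv_eq,
    lintegral_iInf hw hanti (hsw.lintegral_ne_top_of_auiENN (hw 0) hw_aui)]
  exact le_iInf fun m => hsw.limsup_lintegral_le (hw m) (hw 0)
    ((eventually_ge_atTop m).mono fun n hn => hanti hn) (hanti (Nat.zero_le m)) hw_aui

end SetwiseConv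

/-- Monotone convergence theorem for setwise converging measures (Corollary 6.2). -/
theorem monotone_convergence_setwise {S : Type*} [MeasurableSpace S]
    (μ : ℕ → Measure S) (ν : Measure S) [IsFiniteMeasure ν] (hsw : SetwiseConv μ ν)
    (f : ℕ → S → EReal) (hf : ∀ n, Measurable (f n))
    (hmono : ∀ n s, f n s ≤ f (n + 1) s)
    (g : S → EReal) (hlim : ∀ s, Tendsto (fun n => f n s) atTop (𝓝 (g s)))
    (haui₁ : AUI μ (fun _ s => max (-(f 0 s)) 0))
    (haui₂ : AUI μ (fun _ s => max (g s) 0)) :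
    Tendsto (fun n => eIntegral (μ n) (f n)) atTop (𝓝 (eIntegral ν g)) := by
  have hf_mono : Monotone f := monotone_nat_of_le_succ fun n s => hmono n s
  have hg : Measurable g := measurable_of_tendsto_metrizable hf (tendsto_pi_nhds.2 hlim)
  have hpos := hsw.tendsto_lintegral_of_monotone (fun n => (hf n).ereal_toENNReal)
    (fun _ _ h s => EReal.toENNReal_le_toENNReal (hf_mono h s))
    (fun s => (EReal.continuous_toENNReal.tendsto _).comp (hlim s)) haui₂.auiENN_toENNReal
  have hneg := hsw.tendsto_lintegral_of_antitone (fun n => (hf n).neg.ereal_toENNReal)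
    (fun _ _ h s => EReal.toENNReal_le_toENNReal (EReal.neg_le_neg_iff.2 (hf_mono h s)))
    (fun s => (EReal.continuous_toENNReal.tendsto _).comp (hlim s).neg) haui₁.auiENN_toENNReal
  simp only [eIntegral, EReal.posENN_eq_toENNReal, EReal.negENN_eq_toENNReal_neg]
  exact EReal.tendsto_coe_ennreal_sub hpos hneg
    (.inl (hsw.lintegral_ne_top_of_auiENN hg.ereal_toENNReal haui₂.auiENN_toENNReal))
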